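/- Decomposition of the q-exponential into q-Bessel functions of order ±1/2: for every real u with 0 < u < 1/(1−q), the complex series e_q(iu) = ∑_{j=0}^∞ (iu)^j/[j]_q! converges and e_q(iu) = Γ_{q²}(1/2) · (u/(1+q))^{1/2} · ( J^{(1)}_{−1/2}(u|q²) + i · J^{(1)}_{1/2}(u|q²) ). -/

import Mathlib

open scoped BigOperators

noncomputable section

/-- The q-number `[u]_q = (q^u - 1)/(q - 1)`. -/
def qNum (q u : ℝ) : ℝ := (q ^ u - 1) / (q - 1)

/-- The q-factorial `[n]_q! = ∏_{i=1}^n [i]_q`. -/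
def qFact (q : ℝ) (n : ℕ) : ℝ := ∏ i ∈ Finset.range n, qNum q ((i : ℝ) + 1)

/-- The q-Gamma function `Γ_q(t) = (1-q)^{1-t} ∏_{k=0}^∞ (1-q^{k+1})/(1-q^{k+t})`. -/
def qGamma (q t : ℝ) : ℝ :=
  (1 - q) ^ (1 - t) * ∏' k : ℕ, (1 - q ^ (k + 1)) / (1 - q ^ ((k : ℝ) + t))

/-- The q-derivative `∂^q_t f(t) = (f(qt) - f(t))/((q-1)t)`.
The `q⁻¹`-derivative is `qDeriv q⁻¹`. -/
def qDeriv (q : ℝ) (f : ℝ → ℝ) (t : ℝ) : ℝ := (f (q * t) - f t) / ((q - 1) * t)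

/-- The q-Pochhammer symbol `(a; q)_k = ∏_{l=0}^{k-1} (1 - a q^l)`. -/
def qPoch (a q : ℝ) (k : ℕ) : ℝ := ∏ l ∈ Finset.range k, (1 - a * q ^ l)

/-- The q-exponential `E_q(t) = ∑_{j=0}^∞ q^{j(j-1)/2} t^j/[j]_q!`. -/
def qExpE (q t : ℝ) : ℝ := ∑' j : ℕ, q ^ (j * (j - 1) / 2) * t ^ j / qFact q j

/-- `e_q(-u) := 1/E_q(u)` (intended for `u ≥ 0`); `qExpe q u` denotes `e_q(-u)`. -/
def qExpe (q u : ℝ) : ℝ := (qExpE q u)⁻¹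

/-- The first q-Bessel function `J^{(1)}_ν(x|q²)`. -/
def qBessel1 (q ν x : ℝ) : ℝ :=
  (x / (1 + q)) ^ ν *
    ∑' i : ℕ, (-1 : ℝ) ^ i / (qFact (q ^ 2) i * qGamma (q ^ 2) ((i : ℝ) + ν + 1)) *
      (x / (1 + q)) ^ (2 * i)

/-- The second q-Bessel function `J^{(2)}_ν(x|q²)`. -/
def qBessel2 (q ν x : ℝ) : ℝ :=
  q ^ (ν ^ 2) * (x / (1 + q)) ^ ν *
    ∑' i : ℕ, q ^ (2 * (i : ℝ) * ((i : ℝ) + ν)) * (-1 : ℝ) ^ i /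
        (qFact (q ^ 2) i * qGamma (q ^ 2) ((i : ℝ) + ν + 1)) *
      (x / (1 + q)) ^ (2 * i)

/-- The q-Laguerre polynomial `𝓛^{(α)}_j(u|q²)`. -/
def qLaguerre (q α : ℝ) (j : ℕ) (u : ℝ) : ℝ :=
  ∑ i ∈ Finset.range (j + 1),
    q ^ ((j - i) * (j - i + 1)) * (-u) ^ i / (qFact (q ^ 2) (j - i) * qFact (q ^ 2) i) *
      (qPoch (q ^ (2 * (i : ℝ) + 2 * α + 2)) (q ^ 2) (j - i) / (1 - q ^ 2) ^ (j - i))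

/-- The q-Laguerre polynomial `𝓛^{(α)}_j(u|q^{-2})`. -/
def qLaguerreInv (q α : ℝ) (j : ℕ) (u : ℝ) : ℝ :=
  q ^ (-(j : ℝ) * ((j : ℝ) + 1 + 2 * α)) *
    ∑ i ∈ Finset.range (j + 1),
      q ^ (2 * (i : ℝ) * ((i : ℝ) + α)) * (-u) ^ i / (qFact (q ^ 2) (j - i) * qFact (q ^ 2) i) *
        (qPoch (q ^ (2 * (i : ℝ) + 2 * α + 2)) (q ^ 2) (j - i) / (1 - q ^ 2) ^ (j - i))

/-- The finite Jackson q-integral `∫_0^a f(t) d_q t = (1-q) a ∑_{k=0}^∞ f(q^k a) q^k`. -/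
def jackson (q a : ℝ) (f : ℝ → ℝ) : ℝ := (1 - q) * a * ∑' k : ℕ, f (q ^ k * a) * q ^ k

/-- The infinite Jackson q-integral `∫_0^{γ·∞} f(t) d_q t = (1-q) γ ∑_{k=-∞}^∞ f(q^k γ) q^k`. -/
def jacksonInf (q γ : ℝ) (f : ℝ → ℝ) : ℝ := (1 - q) * γ * ∑' k : ℤ, f (q ^ k * γ) * q ^ k

/-- The first q-Hankel transform `𝓗̄^{q,β}_ν`. -/
def hankel1 (q μ ν β : ℝ) (f : ℝ → ℝ) (t : ℝ) : ℝ :=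
  (1 + q) / μ * jackson q (Real.sqrt (μ / ((1 - q ^ 2) * β)))
    (fun r => qBessel1 q ν ((1 + q) / μ * (r * t)) / (r * t) ^ ν * r ^ (2 * ν + 1) * f r)

/-- The second q-Hankel transform `𝓗^{q,γ}_ν`. -/
def hankel2 (q μ ν γ : ℝ) (f : ℝ → ℝ) (r : ℝ) : ℝ :=
  (1 + q) / μ * jacksonInf q γ
    (fun t => qBessel2 q ν (q * ((1 + q) / μ) * (r * t)) / (r * t) ^ ν * t ^ (2 * ν + 1) * f t)

/-!
Split `e_q(iu)` into its even and odd parts,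
`∑ (-1)^k u^{2k}/[2k]_q! + i ∑ (-1)^k u^{2k+1}/[2k+1]_q!`. Each matches the corresponding Bessel
series term by term thanks to the q-duplication formula
`[n]_q! Γ_{q²}(1/2) = (1+q)^n Γ_{q²}((n+1)/2) Γ_{q²}(n/2+1)`, which follows by induction on `n`
from `Γ_{q²}(t+1) = [t]_{q²} Γ_{q²}(t)` and `(1+q)[n/2]_{q²} = [n]_q`. The functional equation
comes from `Γ_q(t) = (1-q)^{1-t} (q;q)_∞ / (q^t;q)_∞` and `(a;q)_∞ = (1-a)(aq;q)_∞`.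
Convergence is the ratio test, since `[n]_q → 1/(1-q)`.
-/

open Filter Topology

lemma qNum_natCast (q : ℝ) (n : ℕ) : qNum q n = (1 - q ^ n) / (1 - q) := by
  rw [qNum, Real.rpow_natCast, ← neg_div_neg_eq, neg_sub, neg_sub]

lemma qNum_pos {q t : ℝ} (hq0 : 0 < q) (hq1 : q < 1) (ht : 0 < t) : 0 < qNum q t :=
  div_pos_of_neg_of_neg (by linarith [Real.rpow_lt_one hq0.le hq1 ht]) (by linarith)

lemma one_add_mul_qNum_sq_half {q : ℝ} (hq : 0 ≤ q) (x : ℝ) :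
    (1 + q) * qNum (q ^ 2) (x / 2) = qNum q x := by
  rw [qNum, qNum, ← Real.rpow_natCast_mul hq, show ((2 : ℕ) : ℝ) * (x / 2) = x by push_cast; ring]
  rcases eq_or_ne q 1 with rfl | hq1
  · simp
  · have : q ^ 2 - 1 = (q - 1) * (1 + q) := by ring
    rw [this]
    field_simp [sub_ne_zero.mpr hq1, show 1 + q ≠ 0 by positivity]

lemma tendsto_qNum_natCast {q : ℝ} (hq0 : 0 ≤ q) (hq1 : q < 1) :
    Tendsto (fun n : ℕ => qNum q n) atTop (𝓝 (1 - q)⁻¹) := by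
  simp only [qNum_natCast]
  simpa using ((tendsto_pow_atTop_nhds_zero_of_lt_one hq0 hq1).const_sub 1).div_const (1 - q)

lemma qFact_succ (q : ℝ) (n : ℕ) : qFact q (n + 1) = qFact q n * qNum q ((n : ℝ) + 1) :=
  Finset.prod_range_succ _ _

lemma qFact_pos {q : ℝ} (hq0 : 0 < q) (hq1 : q < 1) (n : ℕ) : 0 < qFact q n :=
  Finset.prod_pos fun _ _ => qNum_pos hq0 hq1 (by positivity)

/-- `(a; q)_∞`. -/
def qPochInf (a q : ℝ) : ℝ := ∏' l : ℕ, (1 - a * q ^ l)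

section qPochInf

variable {q : ℝ}

lemma summable_norm_mul_pow (a : ℝ) (hq : |q| < 1) : Summable fun l : ℕ => ‖a * q ^ l‖ := by
  simpa [norm_mul, norm_pow] using (summable_geometric_of_lt_one (abs_nonneg q) hq).mul_left |a|

lemma multipliable_one_sub_mul_pow (a : ℝ) (hq : |q| < 1) :
    Multipliable fun l : ℕ => 1 - a * q ^ l := by
  simpa [sub_eq_add_neg] using
    Real.multipliable_one_add_of_summable ((summable_norm_mul_pow a hq).of_norm.neg)

lemma qPochInf_ne_zero {a : ℝ} (ha : |a| < 1) (hq : |q| < 1) : qPochInf a q ≠ 0 := by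
  have hsmall (l : ℕ) : |a * q ^ l| < 1 := by
    rw [abs_mul, abs_pow]
    exact (mul_le_of_le_one_right (abs_nonneg a) (pow_le_one₀ (abs_nonneg q) hq.le)).trans_lt ha
  simpa [qPochInf, sub_eq_add_neg] using
    tprod_one_add_ne_zero_of_summable (f := fun l : ℕ => -(a * q ^ l))
      (fun l => by linarith [le_abs_self (a * q ^ l), hsmall l])
      (by simpa using summable_norm_mul_pow a hq)

lemma qPochInf_eq_one_sub_mul (a : ℝ) (hq : |q| < 1) :
    qPochInf a q = (1 - a) * qPochInf (a * q) q := by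
  rw [qPochInf, tprod_eq_zero_mul']
  · simp [qPochInf, pow_succ', mul_assoc]
  · simpa [pow_succ', mul_assoc] using multipliable_one_sub_mul_pow (a * q) hq

end qPochInf

section qGamma

variable {q : ℝ}

lemma abs_rpow_lt_one (hq0 : 0 < q) (hq1 : q < 1) {t : ℝ} (ht : 0 < t) : |q ^ t| < 1 := by
  rw [abs_of_pos (Real.rpow_pos_of_pos hq0 t)]
  exact Real.rpow_lt_one hq0.le hq1 ht

lemma qGamma_eq_qPochInf (hq0 : 0 < q) (hq1 : q < 1) {t : ℝ} (ht : 0 < t) :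
    qGamma q t = (1 - q) ^ (1 - t) * (qPochInf q q / qPochInf (q ^ t) q) := by
  have hq : |q| < 1 := abs_lt.mpr ⟨by linarith, hq1⟩
  have hqt := abs_rpow_lt_one hq0 hq1 ht
  rw [qGamma, qPochInf, qPochInf, ← Multipliable.tprod_div₀ (multipliable_one_sub_mul_pow q hq)
    (multipliable_one_sub_mul_pow _ hq) (qPochInf_ne_zero hqt hq)]
  congr 2 with k
  rw [pow_succ', Real.rpow_add hq0, Real.rpow_natCast, mul_comm (q ^ k)]

lemma qGamma_ne_zero (hq0 : 0 < q) (hq1 : q < 1) {t : ℝ} (ht : 0 < t) : qGamma q t ≠ 0 := by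
  have hq : |q| < 1 := abs_lt.mpr ⟨by linarith, hq1⟩
  have hqt := abs_rpow_lt_one hq0 hq1 ht
  rw [qGamma_eq_qPochInf hq0 hq1 ht]
  exact mul_ne_zero (Real.rpow_pos_of_pos (by linarith) _).ne'
    (div_ne_zero (qPochInf_ne_zero hq hq) (qPochInf_ne_zero hqt hq))

lemma qGamma_add_one (hq0 : 0 < q) (hq1 : q < 1) {t : ℝ} (ht : 0 < t) :
    qGamma q (t + 1) = qNum q t * qGamma q t := by
  have hq : |q| < 1 := abs_lt.mpr ⟨by linarith, hq1⟩
  have hqt := abs_rpow_lt_one hq0 hq1 (show 0 < t + 1 by linarith)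
  have hPt : qPochInf (q ^ t) q = (1 - q ^ t) * qPochInf (q ^ (t + 1)) q := by
    rw [qPochInf_eq_one_sub_mul _ hq, Real.rpow_add_one hq0.ne']
  have h1q : 1 - q ≠ 0 := by linarith
  have hq1' : q - 1 ≠ 0 := by linarith
  have h1qt : 1 - q ^ t ≠ 0 := by linarith [Real.rpow_lt_one hq0.le hq1 ht]
  rw [qGamma_eq_qPochInf hq0 hq1 (by linarith), qGamma_eq_qPochInf hq0 hq1 ht, hPt, qNum,
    show 1 - (t + 1) = (1 - t) - 1 by ring, Real.rpow_sub_one h1q]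
  have := qPochInf_ne_zero hqt hq
  field_simp
  ring

lemma qGamma_one (hq0 : 0 < q) (hq1 : q < 1) : qGamma q 1 = 1 := by
  have hq : |q| < 1 := abs_lt.mpr ⟨by linarith, hq1⟩
  rw [qGamma_eq_qPochInf hq0 hq1 one_pos, Real.rpow_one, div_self (qPochInf_ne_zero hq hq)]
  simp

lemma qGamma_natCast_add_one (hq0 : 0 < q) (hq1 : q < 1) (n : ℕ) :
    qGamma q (n + 1) = qFact q n := by
  induction n with
  | zero => simpa [qFact] using qGamma_one hq0 hq1
  | succ n ih =>
    rw [Nat.cast_succ, qGamma_add_one hq0 hq1 (by positivity), ih, qFact_succ, mul_comm]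

lemma qFact_mul_qGamma_half (hq0 : 0 < q) (hq1 : q < 1) (n : ℕ) :
    qFact q n * qGamma (q ^ 2) (1 / 2) =
      (1 + q) ^ n * qGamma (q ^ 2) ((n + 1) / 2) * qGamma (q ^ 2) (n / 2 + 1) := by
  have hq2 : 0 < q ^ 2 := by positivity
  have hq21 : q ^ 2 < 1 := by nlinarith
  induction n with
  | zero => simp [qFact, qGamma_one hq2 hq21]
  | succ n ih =>
    have hhalf : qGamma (q ^ 2) ((n + 1) / 2 + 1) = qNum (q ^ 2) ((n + 1) / 2) *
        qGamma (q ^ 2) ((n + 1) / 2) := qGamma_add_one hq2 hq21 (by positivity)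
    rw [qFact_succ, mul_right_comm, ih, ← one_add_mul_qNum_sq_half hq0.le, Nat.cast_succ,
      hhalf, show ((n : ℝ) + 1 + 1) / 2 = n / 2 + 1 by ring]
    ring

end qGamma

section qBessel

variable {q u : ℝ}

lemma qGamma_half_mul_qBessel1_neg_half (hq0 : 0 < q) (hq1 : q < 1) (hu : 0 < u) :
    qGamma (q ^ 2) (1 / 2) * (u / (1 + q)) ^ ((1 : ℝ) / 2) * qBessel1 q (-(1 / 2)) u =
      ∑' k : ℕ, (-1) ^ k * u ^ (2 * k) / qFact q (2 * k) := by
  have hv : 0 < u / (1 + q) := by positivity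
  have hq2 : 0 < q ^ 2 := by positivity
  have hq21 : q ^ 2 < 1 := by nlinarith
  rw [qBessel1, mul_assoc, ← mul_assoc (_ ^ _), ← Real.rpow_add hv,
    show (1 : ℝ) / 2 + -(1 / 2) = 0 by ring, Real.rpow_zero, one_mul, ← tsum_mul_left]
  congr 1 with k
  have hdup := qFact_mul_qGamma_half hq0 hq1 (2 * k)
  rw [show ((2 * k : ℕ) : ℝ) / 2 + 1 = k + 1 by push_cast; ring,
    qGamma_natCast_add_one hq2 hq21] at hdup
  rw [show ((k : ℝ) + -(1 / 2) + 1) = ((2 * k : ℕ) + 1) / 2 by push_cast; ring]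
  have := qGamma_ne_zero hq2 hq21 (show (0 : ℝ) < ((2 * k : ℕ) + 1) / 2 by positivity)
  have := qFact_pos hq2 hq21 k
  have := qFact_pos hq0 hq1 (2 * k)
  rw [div_pow]
  field_simp
  linear_combination hdup

lemma qGamma_half_mul_qBessel1_half (hq0 : 0 < q) (hq1 : q < 1) (hu : 0 ≤ u) :
    qGamma (q ^ 2) (1 / 2) * (u / (1 + q)) ^ ((1 : ℝ) / 2) * qBessel1 q (1 / 2) u =
      ∑' k : ℕ, (-1) ^ k * u ^ (2 * k + 1) / qFact q (2 * k + 1) := by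
  have hv : 0 ≤ u / (1 + q) := by positivity
  have hq2 : 0 < q ^ 2 := by positivity
  have hq21 : q ^ 2 < 1 := by nlinarith
  rw [qBessel1, mul_assoc, ← mul_assoc (_ ^ _), ← Real.rpow_add' hv (by norm_num),
    show (1 : ℝ) / 2 + 1 / 2 = 1 by ring, Real.rpow_one, ← tsum_mul_left, ← tsum_mul_left]
  congr 1 with k
  have hdup := qFact_mul_qGamma_half hq0 hq1 (2 * k + 1)
  rw [show ((2 * k + 1 : ℕ) : ℝ) + 1 = 2 * (k + 1) by push_cast; ring,
    mul_div_cancel_left₀ _ two_ne_zero, qGamma_natCast_add_one hq2 hq21] at hdup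
  rw [show ((k : ℝ) + 1 / 2 + 1) = (2 * k + 1 : ℕ) / 2 + 1 by push_cast; ring]
  have := qGamma_ne_zero hq2 hq21 (show (0 : ℝ) < (2 * k + 1 : ℕ) / 2 + 1 by positivity)
  -- Opaque to `field_simp`, which would otherwise rewrite the argument.
  set Γ := qGamma (q ^ 2) ((2 * k + 1 : ℕ) / 2 + 1)
  have := qFact_pos hq2 hq21 k
  have := qFact_pos hq0 hq1 (2 * k + 1)
  rw [div_pow, pow_succ]
  field_simp
  linear_combination u ^ (2 * k + 1) * hdup

end qBessel

lemma summable_pow_div_qFact {q : ℝ} (hq0 : 0 < q) (hq1 : q < 1) {z : ℂ}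
    (hz : ‖z‖ < 1 / (1 - q)) :
    Summable fun n : ℕ => z ^ n / (qFact q n : ℂ) := by
  have h1q : 0 < 1 - q := by linarith
  have hlt : ‖z‖ * (1 - q) < 1 := by rwa [lt_div_iff₀ h1q] at hz
  have hratio : Tendsto (fun n : ℕ => ‖z‖ / qNum q ((n : ℝ) + 1)) atTop
      (𝓝 (‖z‖ * (1 - q))) := by
    have := (tendsto_const_nhds (x := ‖z‖)).div ((tendsto_qNum_natCast hq0.le hq1).comp
      (tendsto_add_atTop_nat 1)) (inv_ne_zero h1q.ne')
    simpa [Function.comp_def, div_inv_eq_mul, Pi.div_def] using this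
  have hr : ‖z‖ * (1 - q) < (‖z‖ * (1 - q) + 1) / 2 := by linarith
  refine summable_of_ratio_norm_eventually_le (r := (‖z‖ * (1 - q) + 1) / 2) (by linarith) ?_
  filter_upwards [hratio.eventually (gt_mem_nhds hr)] with n hn
  have hnorm : ‖z ^ (n + 1) / (qFact q (n + 1) : ℂ)‖ =
      ‖z‖ / qNum q ((n : ℝ) + 1) * ‖z ^ n / (qFact q n : ℂ)‖ := by
    rw [qFact_succ]
    have hF := qFact_pos hq0 hq1 n
    have hN := qNum_pos hq0 hq1 (by positivity : (0 : ℝ) < n + 1)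
    simp only [norm_div, norm_pow, Complex.norm_real, Real.norm_eq_abs, abs_mul, abs_of_pos hF,
      abs_of_pos hN]
    field_simp
    ring
  rw [hnorm]
  exact mul_le_mul_of_nonneg_right hn.le (norm_nonneg _)

open Complex in
lemma tsum_I_mul_pow_div (u : ℝ) (c : ℕ → ℝ)
    (h : Summable fun n : ℕ => (I * u) ^ n / (c n : ℂ)) :
    ∑' n : ℕ, (I * u) ^ n / (c n : ℂ) =
      ((∑' k : ℕ, (-1) ^ k * u ^ (2 * k) / c (2 * k) : ℝ) : ℂ) +
        I * ((∑' k : ℕ, (-1) ^ k * u ^ (2 * k + 1) / c (2 * k + 1) : ℝ) : ℂ) := by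
  have hI2 (k : ℕ) : (I * u) ^ (2 * k) = ((-1) ^ k * u ^ (2 * k) : ℝ) := by
    rw [pow_mul, mul_pow, I_sq]
    push_cast
    ring
  have heven := h.comp_injective (i := fun k => 2 * k) fun _ _ hab => by dsimp only at hab; omega
  have hodd := h.comp_injective (i := fun k => 2 * k + 1) fun _ _ hab => by
    dsimp only at hab; omega
  rw [← tsum_even_add_odd (f := fun n => (I * u) ^ n / (c n : ℂ)) heven hodd, ofReal_tsum,
    ofReal_tsum, ← tsum_mul_left]
  congr 1 <;> congr 1 with k
  · push_cast [hI2]; ring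
  · rw [pow_succ, hI2]; push_cast; ring

/-- decomposition of the q-exponential into q-Bessel functions of order `±1/2`:
for `0 < u < 1/(1-q)`, the series `e_q(iu) = ∑_j (iu)^j/[j]_q!` converges and
`e_q(iu) = Γ_{q²}(1/2) (u/(1+q))^{1/2} (J^{(1)}_{-1/2}(u|q²) + i J^{(1)}_{1/2}(u|q²))`. -/
theorem qExp_qBessel_decomposition (q : ℝ) (hq0 : 0 < q) (hq1 : q < 1)
    (u : ℝ) (hu0 : 0 < u) (hu1 : u < 1 / (1 - q)) :
    Summable (fun j : ℕ => (Complex.I * (u : ℂ)) ^ j / ((qFact q j : ℝ) : ℂ)) ∧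
    ∑' j : ℕ, (Complex.I * (u : ℂ)) ^ j / ((qFact q j : ℝ) : ℂ) =
      ((qGamma (q ^ 2) (1 / 2) : ℝ) : ℂ) * (((u / (1 + q)) ^ ((1 : ℝ) / 2) : ℝ) : ℂ) *
        (((qBessel1 q (-(1 / 2)) u : ℝ) : ℂ) +
          Complex.I * ((qBessel1 q (1 / 2) u : ℝ) : ℂ)) := by
  have hsum := summable_pow_div_qFact hq0 hq1 (z := Complex.I * u)
    (by rwa [norm_mul, Complex.norm_I, one_mul, Complex.norm_real, Real.norm_of_nonneg hu0.le])
  refine ⟨hsum, ?_⟩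
  rw [tsum_I_mul_pow_div u _ hsum, ← qGamma_half_mul_qBessel1_neg_half hq0 hq1 hu0,
    ← qGamma_half_mul_qBessel1_half hq0 hq1 hu0.le]
  push_cast
  ring
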